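/- Fix d = 2 and n = 1 (a single qubit). Let (M_k)_{k ∈ ℤ/2ℤ} be any family of ℂ-linear maps on 2 × 2 complex matrices such that ν̃_{0,1}(M) ≠ 0 and ν̃_{1,0}(M) ≠ 0. Let r = ν̃_{1,0}(M)/ν̃_{0,1}(M) and let ℬ be the invertible ℂ-linear map on 2 × 2 complex matrices defined by ℬ(ρ) = (1/2)( Tr(ρ)·I + Tr(Xρ)·X + Tr(Yρ)·Y + r·Tr(Zρ)·Z ), where X, Y, Z are the Pauli matrices. Then the gauge-transformed family M'_k = ℬ ∘ M_k ∘ ℬ^{-1} satisfies ν̃_{0,1}(M') = ν̃_{1,0}(M), ν̃_{1,0}(M') = ν̃_{0,1}(M), ν̃_{0,0}(M') = ν̃_{0,0}(M), and ν̃_{1,1}(M') = ν̃_{1,1}(M); that is, the gauge transformation swaps ν̃_{0,1} and ν̃_{1,0} and fixes the diagonal generalized Pauli fidelities. -/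

import Mathlib

open scoped BigOperators
open Matrix

/-- The Pauli `X` matrix. -/
noncomputable def PX : Matrix (Fin 2) (Fin 2) ℂ := !![0, 1; 1, 0]

/-- The Pauli `Y` matrix (`Y = iXZ`). -/
noncomputable def PY : Matrix (Fin 2) (Fin 2) ℂ := !![0, -Complex.I; Complex.I, 0]

/-- The Pauli `Z` matrix. -/
noncomputable def PZ : Matrix (Fin 2) (Fin 2) ℂ := !![1, 0; 0, -1]

/-- Single-qubit generalized Pauli fidelities:
`ν̃_{s,t}(M) = (1/2) Σ_{k ∈ ℤ/2ℤ} (−1)^{k(s−t)} Tr((Z^t)† M_k(Z^s))`. -/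
noncomputable def gpf2 (M : ZMod 2 → (Matrix (Fin 2) (Fin 2) ℂ → Matrix (Fin 2) (Fin 2) ℂ))
    (s t : ZMod 2) : ℂ :=
  (1 / 2 : ℂ) * ∑ k : ZMod 2, (-1 : ℂ) ^ (k * (s - t)).val *
    ((PZ ^ t.val)ᴴ * M k (PZ ^ s.val)).trace

/-- The gauge transformation
`ℬ(ρ) = (1/2)(Tr(ρ)·I + Tr(Xρ)·X + Tr(Yρ)·Y + r·Tr(Zρ)·Z)`;
for `r ≠ 0` it is invertible with inverse `Bmap r⁻¹`. -/
noncomputable def Bmap (r : ℂ) (ρ : Matrix (Fin 2) (Fin 2) ℂ) : Matrix (Fin 2) (Fin 2) ℂ :=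
  (1 / 2 : ℂ) •
    (ρ.trace • (1 : Matrix (Fin 2) (Fin 2) ℂ) + (PX * ρ).trace • PX + (PY * ρ).trace • PY +
      (r * (PZ * ρ).trace) • PZ)

lemma PZ_her : PZᴴ = PZ := by
  ext i j; fin_cases i <;> fin_cases j <;> simp [PZ]

lemma Bmap_one (c : ℂ) : Bmap c 1 = 1 := by
  ext i j; fin_cases i <;> fin_cases j <;>
    simp [Bmap, PX, PY, PZ, Matrix.trace_fin_two, Matrix.mul_apply, Fin.sum_univ_two,
      Matrix.one_apply]

lemma Bmap_PZ (c : ℂ) : Bmap c PZ = c • PZ := by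
  ext i j; fin_cases i <;> fin_cases j <;>
    simp [Bmap, PX, PY, PZ, Matrix.trace_fin_two, Matrix.mul_apply, Fin.sum_univ_two,
      Matrix.one_apply] <;> ring

lemma Bmap_smul (c a : ℂ) (A : Matrix (Fin 2) (Fin 2) ℂ) :
    Bmap c (a • A) = a • Bmap c A := by
  simp only [Bmap, Matrix.mul_smul, Matrix.trace_smul, smul_smul, smul_add, smul_eq_mul]
  module

lemma trace_Bmap (c : ℂ) (A : Matrix (Fin 2) (Fin 2) ℂ) :
    (Bmap c A).trace = A.trace := by
  simp [Bmap, PX, PY, PZ, Matrix.trace_fin_two, Matrix.mul_apply, Fin.sum_univ_two,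
    Matrix.one_apply, Matrix.add_apply, Matrix.smul_apply, smul_eq_mul, Matrix.vecMul,
    dotProduct]; ring

lemma traceZ_Bmap (c : ℂ) (A : Matrix (Fin 2) (Fin 2) ℂ) :
    (PZ * Bmap c A).trace = c * (PZ * A).trace := by
  simp [Bmap, PX, PY, PZ, Matrix.trace_fin_two, Matrix.mul_apply, Fin.sum_univ_two,
    Matrix.one_apply, Matrix.add_apply, Matrix.smul_apply, smul_eq_mul, Matrix.vecMul,
    dotProduct]; ring

lemma gpf2_gauge_scale
    (M : ZMod 2 → (Matrix (Fin 2) (Fin 2) ℂ →ₗ[ℂ] Matrix (Fin 2) (Fin 2) ℂ))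
    (r : ℂ)
    (M' : ZMod 2 → (Matrix (Fin 2) (Fin 2) ℂ → Matrix (Fin 2) (Fin 2) ℂ))
    (hM' : ∀ k ρ, M' k ρ = Bmap r (M k (Bmap r⁻¹ ρ))) (s t : ZMod 2) :
    gpf2 M' s t = r ^ t.val * r⁻¹ ^ s.val * gpf2 (fun k ρ => M k ρ) s t := by
  have hB : ∀ k, M' k (PZ ^ s.val) = r⁻¹ ^ s.val • Bmap r (M k (PZ ^ s.val)) := by
    intro k
    rw [hM']
    have h1 : (1 : ZMod 2).val = 1 := rfl
    fin_cases s
    · simp [Bmap_one, ZMod.val]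
    · simp [h1, Bmap_PZ, _root_.map_smul, Bmap_smul, ZMod.val]
  have hT : ∀ A, ((PZ ^ t.val)ᴴ * Bmap r A).trace = r ^ t.val * ((PZ ^ t.val)ᴴ * A).trace := by
    intro A
    have h1 : (1 : ZMod 2).val = 1 := rfl
    fin_cases t
    · simp [trace_Bmap, ZMod.val]
    · simp [h1, PZ_her, traceZ_Bmap, ZMod.val]
  unfold gpf2
  simp only [hB, Matrix.mul_smul, Matrix.trace_smul, hT, smul_eq_mul, Finset.mul_sum]
  refine Finset.sum_congr rfl fun k _ => by ring

/-- For a single qubit, the gauge transformation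
`M'_k = ℬ ∘ M_k ∘ ℬ^{-1}` with `r = ν̃_{1,0}(M)/ν̃_{0,1}(M)` swaps `ν̃_{0,1}` and
`ν̃_{1,0}` and fixes the diagonal generalized Pauli fidelities. -/
theorem gauge_transformation_swaps_gpf
    (M : ZMod 2 → (Matrix (Fin 2) (Fin 2) ℂ →ₗ[ℂ] Matrix (Fin 2) (Fin 2) ℂ))
    (h01 : gpf2 (fun k ρ => M k ρ) 0 1 ≠ 0) (h10 : gpf2 (fun k ρ => M k ρ) 1 0 ≠ 0)
    (r : ℂ) (hr : r = gpf2 (fun k ρ => M k ρ) 1 0 / gpf2 (fun k ρ => M k ρ) 0 1)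
    (M' : ZMod 2 → (Matrix (Fin 2) (Fin 2) ℂ → Matrix (Fin 2) (Fin 2) ℂ))
    (hM' : ∀ k ρ, M' k ρ = Bmap r (M k (Bmap r⁻¹ ρ))) :
    gpf2 M' 0 1 = gpf2 (fun k ρ => M k ρ) 1 0 ∧
    gpf2 M' 1 0 = gpf2 (fun k ρ => M k ρ) 0 1 ∧
    gpf2 M' 0 0 = gpf2 (fun k ρ => M k ρ) 0 0 ∧
    gpf2 M' 1 1 = gpf2 (fun k ρ => M k ρ) 1 1 := by

  have hr0 : r ≠ 0 := by
    rw [hr]; exact div_ne_zero h10 h01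
  have h0 : (0 : ZMod 2).val = 0 := rfl
  have h1 : (1 : ZMod 2).val = 1 := rfl
  refine ⟨?_, ?_, ?_, ?_⟩ <;> rw [gpf2_gauge_scale M r M' hM']
  · rw [h0, h1, pow_one, pow_zero, mul_one, hr, div_mul_cancel₀ _ h01]
  · rw [h0, h1, pow_one, pow_zero, one_mul, hr]
    field_simp
  · rw [h0, pow_zero, pow_zero]; ring
  · rw [h1, pow_one, pow_one, mul_inv_cancel₀ hr0, one_mul]
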